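/- arXiv:2604.27024 — 5 statements merged into one kernel-verified Lean document; each statement's English description precedes it below -/
import Mathlib

section
/- Duplicator's interval strategy: for finite linear orders of sizes m and m' with m, m' ≥ 2^q, the two orders satisfy the same first-order sentences of quantifier rank at most q; concretely, the back-and-forth invariant min(|J|, 2^r) = min(|J'|, 2^r) on corresponding intervals can be maintained for r rounds starting from r = q. -/
open FirstOrder

/-- Quantifier rank of a first-order bounded formula. -/
def qrank {L : Language} {α : Type*} : ∀ {n : ℕ}, L.BoundedFormula α n → ℕ
  | _, .falsum => 0
  | _, .equal _ _ => 0
  | _, .rel _ _ => 0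
  | _, .imp f g => max (qrank f) (qrank g)
  | _, .all f => qrank f + 1

/-!
Place the chosen points of each order on the integer line together with two sentinels at `-1`
and `m`, and compare all pairwise distances truncated at `c` (with sign). Starting from `c = 2^q`,
Duplicator keeps the truncated distances equal at cap `2^r` with `r` rounds left: a new point
falls in a gap between consecutive old points, the two corresponding gaps are either of the same
length or both at least `2^r`, and in the latter case the answer can be placed so that its
distances to both ends agree up to `2^(r-1)`. With cap at least `1` the truncated distances
determine the order type, so atomic formulas agree.
-/

namespace IntervalStrategy

def clip (c d : ℤ) : ℤ := max (-c) (min d c)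

lemma clip_neg {c : ℤ} (hc : 0 ≤ c) (d : ℤ) : clip c (-d) = -clip c d := by
  unfold clip; omega

lemma clip_eq_clip_of_le {c c' d d' : ℤ} (hcc : c' ≤ c)
    (h : clip c d = clip c d') : clip c' d = clip c' d' := by
  unfold clip at *; omega

lemma clip_nonneg_iff {c : ℤ} (hc : 0 < c) {d : ℤ} : 0 ≤ clip c d ↔ 0 ≤ d := by
  unfold clip; omega

lemma clip_add_of_nonneg {c a b a' b' : ℤ} (ha : 0 ≤ a) (hb : 0 ≤ b) (ha' : 0 ≤ a')
    (hb' : 0 ≤ b') (h₁ : clip c a = clip c a') (h₂ : clip c b = clip c b') :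
    clip c (a + b) = clip c (a' + b') := by
  unfold clip at *; omega

lemma exists_clip_split {c a b d : ℤ} (ha : 0 ≤ a) (hb : 0 ≤ b)
    (h : clip (2 * c) (a + b) = clip (2 * c) d) :
    ∃ a', clip c a = clip c a' ∧ clip c b = clip c (d - a') := by
  by_cases hab : a + b < 2 * c
  · refine ⟨a, rfl, ?_⟩
    unfold clip at *; omega
  · by_cases hac : a ≤ c
    · refine ⟨a, rfl, ?_⟩
      unfold clip at *; omega
    by_cases hbc : b ≤ c
    · refine ⟨d - b, ?_, by rw [sub_sub_cancel]⟩
      unfold clip at *; omega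
    · refine ⟨c, ?_, ?_⟩ <;> unfold clip at * <;> omega

section ClipEquiv

variable {ι κ : Type*}

/-- Applied to the points chosen so far together with the two sentinels, this is the invariant
`min(|J|, c) = min(|J'|, c)` on corresponding intervals `J`, `J'`. -/
def ClipEquiv (c : ℤ) (p p' : ι → ℤ) : Prop :=
  ∀ i j, clip c (p j - p i) = clip c (p' j - p' i)

variable {c : ℤ} {p p' : ι → ℤ}

lemma ClipEquiv.symm (h : ClipEquiv c p p') : ClipEquiv c p' p :=
  fun i j => (h i j).symm

lemma ClipEquiv.mono {c' : ℤ} (h : ClipEquiv c p p') (hcc : c' ≤ c) : ClipEquiv c' p p' :=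
  fun i j => clip_eq_clip_of_le hcc (h i j)

lemma ClipEquiv.comp (h : ClipEquiv c p p') (f : κ → ι) : ClipEquiv c (p ∘ f) (p' ∘ f) :=
  fun i j => h (f i) (f j)

lemma ClipEquiv.le_iff (h : ClipEquiv c p p') (hc : 0 < c) (i j : ι) :
    p i ≤ p j ↔ p' i ≤ p' j := by
  rw [← sub_nonneg, ← clip_nonneg_iff hc, h i j, clip_nonneg_iff hc, sub_nonneg]

lemma ClipEquiv.option (h : ClipEquiv c p p') (hc : 0 ≤ c) {z z' : ℤ}
    (hz : ∀ i, clip c (z - p i) = clip c (z' - p' i)) :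
    ClipEquiv c (fun o : Option ι => o.elim z p) (fun o => o.elim z' p') := by
  rintro (_ | i) (_ | j)
  · change clip c (z - z) = clip c (z' - z')
    rw [sub_self, sub_self]
  · change clip c (p j - z) = clip c (p' j - z')
    rw [← neg_sub, ← neg_sub z', clip_neg hc, clip_neg hc, hz j]
  · exact hz i
  · exact h i j

lemma ClipEquiv.exists_extend_of_gap (h : ClipEquiv (2 * c) p p') (hc : 1 ≤ c) {z : ℤ}
    {x y : ι} (hxz : p x < z) (hzy : z < p y) (hgap : ∀ i, p i ≤ p x ∨ p y ≤ p i) :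
    ∃ z', ∀ i, clip c (z - p i) = clip c (z' - p' i) := by
  have hc0 : (0 : ℤ) ≤ c := by omega
  have hc2 : (0 : ℤ) < 2 * c := by omega
  obtain ⟨a', hlow, hhigh⟩ := exists_clip_split (c := c) (a := z - p x) (b := p y - z)
    (d := p' y - p' x) (by omega) (by omega) (by rw [sub_add_sub_cancel']; exact h x y)
  have hnonneg : ∀ {d d' : ℤ}, 0 ≤ d → clip c d = clip c d' → 0 ≤ d' := fun hd he => by
    unfold clip at he; omega
  refine ⟨p' x + a', fun i => ?_⟩
  rcases hgap i with hle | hge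
  · have hle' := (h.le_iff hc2 i x).1 hle
    have key := clip_add_of_nonneg (by omega) (by omega) (hnonneg (by omega) hlow) (by omega) hlow
      ((h.mono (by omega)) i x)
    rwa [sub_add_sub_cancel, ← add_sub_assoc, add_comm a'] at key
  · have hge' := (h.le_iff hc2 y i).1 hge
    have key := clip_add_of_nonneg (by omega) (by omega) (hnonneg (by omega) hhigh) (by omega)
      hhigh ((h.mono (by omega)) y i)
    rw [show z - p i = -(p y - z + (p i - p y)) by ring,
      show p' x + a' - p' i = -(p' y - p' x - a' + (p' i - p' y)) by ring,
      clip_neg hc0, clip_neg hc0, key]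

lemma ClipEquiv.exists_extend [Finite ι] (h : ClipEquiv (2 * c) p p') (hc : 1 ≤ c) (z : ℤ)
    (hlo : ∃ i, p i ≤ z) (hhi : ∃ i, z ≤ p i) :
    ∃ z', ∀ i, clip c (z - p i) = clip c (z' - p' i) := by
  by_cases hpin : ∃ k, p k = z
  · obtain ⟨k, rfl⟩ := hpin
    exact ⟨p' k, fun i => (h.mono (by omega)) i k⟩
  push Not at hpin
  have : Nonempty {i // p i ≤ z} := let ⟨i, hi⟩ := hlo; ⟨⟨i, hi⟩⟩
  have : Nonempty {i // z ≤ p i} := let ⟨i, hi⟩ := hhi; ⟨⟨i, hi⟩⟩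
  obtain ⟨⟨x, hx⟩, hxmax⟩ := Finite.exists_max fun i : {i // p i ≤ z} => p i
  obtain ⟨⟨y, hy⟩, hymin⟩ := Finite.exists_min fun i : {i // z ≤ p i} => p i
  refine h.exists_extend_of_gap hc (lt_of_le_of_ne hx (hpin x))
    (lt_of_le_of_ne' hy (hpin y)) fun i => ?_
  rcases le_total (p i) z with hi | hi
  · exact .inl (hxmax ⟨i, hi⟩)
  · exact .inr (hymin ⟨i, hi⟩)

end ClipEquiv

def withEnds (m : ℕ) {n : ℕ} (v : Fin n → Fin m) : Fin n ⊕ Bool → ℤ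
  | .inl i => v i
  | .inr false => -1
  | .inr true => m

/-- `none` stands for the point appended by `Fin.snoc`. -/
def snocIndex (n : ℕ) : Fin (n + 1) ⊕ Bool → Option (Fin n ⊕ Bool) :=
  Sum.elim (Fin.lastCases none (some ∘ .inl)) (some ∘ .inr)

lemma withEnds_snoc {m n : ℕ} (v : Fin n → Fin m) (z : Fin m) :
    withEnds m (Fin.snoc v z) = (fun o => o.elim (z : ℤ) (withEnds m v)) ∘ snocIndex n := by
  funext k
  rcases k with i | b
  · induction i using Fin.lastCases <;> simp [withEnds, snocIndex]
  · cases b <;> rfl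

variable {m m' n : ℕ}

lemma exists_snoc_clipEquiv {c : ℤ} (hc : 1 ≤ c) {v : Fin n → Fin m} {v' : Fin n → Fin m'}
    (h : ClipEquiv (2 * c) (withEnds m v) (withEnds m' v')) (z : Fin m) :
    ∃ z' : Fin m', ClipEquiv c (withEnds m (Fin.snoc v z)) (withEnds m' (Fin.snoc v' z')) := by
  obtain ⟨z', hz'⟩ := h.exists_extend hc z ⟨.inr false, by simp [withEnds]⟩
    ⟨.inr true, by simp [withEnds]⟩
  -- the sentinels keep the answer inside `[0, m')`
  have hlo := hz' (.inr false)
  have hhi := hz' (.inr true)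
  simp only [withEnds, clip] at hlo hhi
  obtain ⟨z', rfl⟩ := Int.eq_ofNat_of_zero_le (by omega : 0 ≤ z')
  refine ⟨⟨z', by omega⟩, ?_⟩
  rw [withEnds_snoc, withEnds_snoc]
  exact ((h.mono (by omega)).option (by omega) hz').comp _

lemma ClipEquiv.withEnds_le_iff {c : ℤ} (hc : 0 < c) {v : Fin n → Fin m}
    {v' : Fin n → Fin m'} (h : ClipEquiv c (withEnds m v) (withEnds m' v')) (i j : Fin n) :
    v i ≤ v j ↔ v' i ≤ v' j := by
  have hij := h.le_iff hc (.inl i) (.inl j)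
  simp only [withEnds] at hij
  rw [Fin.le_def, Fin.le_def]
  exact_mod_cast hij

lemma clipEquiv_withEnds_empty {c : ℤ} (hm : c ≤ m + 1) (hm' : c ≤ m' + 1) :
    ClipEquiv c (withEnds m (Fin.elim0 : Fin 0 → Fin m)) (withEnds m' Fin.elim0) := by
  rintro (i | (_ | _)) (j | (_ | _)) <;>
    first | exact i.elim0 | exact j.elim0 | simp only [withEnds, clip] <;> omega

attribute [local instance] Language.orderStructure

lemma exists_eq_var_of_orderTerm {n : ℕ} (t : Language.order.Term (Empty ⊕ Fin n)) :
    ∃ i, t = Language.Term.var (.inr i) := by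
  rcases t with (e | i) | ⟨f, _⟩
  · exact e.elim
  · exact ⟨i, rfl⟩
  · exact f.elim

lemma realize_iff_of_clipEquiv (φ : Language.order.BoundedFormula Empty n) {r : ℕ}
    (hφ : qrank φ ≤ r) {v : Fin n → Fin m} {v' : Fin n → Fin m'}
    (h : ClipEquiv (2 ^ r) (withEnds m v) (withEnds m' v')) :
    φ.Realize default v ↔ φ.Realize default v' := by
  induction φ generalizing r with
  | falsum => rfl
  | equal t₁ t₂ =>
    obtain ⟨i, rfl⟩ := exists_eq_var_of_orderTerm t₁
    obtain ⟨j, rfl⟩ := exists_eq_var_of_orderTerm t₂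
    change v i = v j ↔ v' i = v' j
    have hle := h.withEnds_le_iff (by positivity)
    rw [le_antisymm_iff, le_antisymm_iff, hle, hle]
  | rel R ts =>
    cases R
    obtain ⟨i, hi⟩ := exists_eq_var_of_orderTerm (ts 0)
    obtain ⟨j, hj⟩ := exists_eq_var_of_orderTerm (ts 1)
    change (ts 0).realize _ ≤ (ts 1).realize _ ↔ (ts 0).realize _ ≤ (ts 1).realize _
    simpa only [hi, hj, Language.Term.realize_var, Sum.elim_inr] using
      h.withEnds_le_iff (by positivity) i j
  | imp f g ihf ihg =>
    exact imp_congr (ihf (le_of_max_le_left hφ) h) (ihg (le_of_max_le_right hφ) h)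
  | all f ih =>
    obtain ⟨r, rfl⟩ : ∃ r', r = r' + 1 := ⟨r - 1, by simp only [qrank] at hφ; omega⟩
    have hf : qrank f ≤ r := Nat.le_of_succ_le_succ hφ
    rw [pow_succ'] at h
    simp only [Language.BoundedFormula.realize_all]
    constructor
    · intro H z'
      obtain ⟨z, hz⟩ := exists_snoc_clipEquiv (one_le_pow₀ one_le_two) h.symm z'
      exact (ih hf hz.symm).1 (H z)
    · intro H z
      obtain ⟨z', hz⟩ := exists_snoc_clipEquiv (one_le_pow₀ one_le_two) h z
      exact (ih hf hz).2 (H z')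

end IntervalStrategy

/-- Finite linear orders of sizes `m, m' ≥ 2^q` satisfy the same first-order
sentences over the signature `{<}` of quantifier rank at most `q`
(Duplicator's interval strategy in the `q`-round EF game). -/
theorem finite_linear_orders_equiv_qrank (q m m' : ℕ)
    (hm : 2 ^ q ≤ m) (hm' : 2 ^ q ≤ m')
    (φ : Language.order.Sentence) (hφ : qrank φ ≤ q) :
    letI := Language.orderStructure (Fin m)
    letI := Language.orderStructure (Fin m')
    ((Fin m) ⊨ φ ↔ (Fin m') ⊨ φ) := by
  have h : IntervalStrategy.ClipEquiv (2 ^ q) (IntervalStrategy.withEnds m Fin.elim0)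
      (IntervalStrategy.withEnds m' Fin.elim0) :=
    IntervalStrategy.clipEquiv_withEnds_empty (by exact_mod_cast hm.trans m.le_succ)
      (by exact_mod_cast hm'.trans m'.le_succ)
  exact IntervalStrategy.realize_iff_of_clipEquiv φ hφ h
end

section
/- Bounded separator theorem: for disjoint K, H ⊆ Σ*, sup_n σ_{K,H}(n) < ∞ iff there exists q and a union S of ≡_q-classes with K ⊆ S and H ∩ S = ∅; and the supremum equals the least such q. -/
/-- Bounded separator theorem: for disjoint `K, H ⊆ Σ*`, `sup_n σ_{K,H}(n) < ∞` iff
there is `q` and a union `S` of `≡_q`-classes with `K ⊆ S` and `H ∩ S = ∅`; and the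
supremum equals the least such `q`. -/
theorem bounded_separator_iff {A : Type*} [Finite A]
    (E : ℕ → List A → List A → Prop) (K H : Set (List A))
    (hdisj : Disjoint K H)
    (hequiv : ∀ q, Equivalence (E q))
    (hdec : ∀ q q' : ℕ, q ≤ q' → ∀ u v, E q' u v → E q u v)
    (hsep : ∀ u v : List A, u ≠ v → ∃ q, ¬ E q u v)
    (hfin : ∀ q, Finite (Quot (E q)))
    (σ : ℕ → ℕ)
    (hσ : ∀ n, σ n = sInf {q : ℕ | ∀ u v : List A, u ∈ K → v ∈ H →
        u.length ≤ n → v.length ≤ n → ¬ E q u v}) :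
    (BddAbove (Set.range σ) ↔
      ∃ q, ∃ S : Set (List A), (∀ u v : List A, E q u v → (u ∈ S ↔ v ∈ S)) ∧
        K ⊆ S ∧ H ∩ S = ∅) ∧
    ((∃ q, ∃ S : Set (List A), (∀ u v : List A, E q u v → (u ∈ S ↔ v ∈ S)) ∧
        K ⊆ S ∧ H ∩ S = ∅) →
      (⨆ n, σ n) = sInf {q : ℕ | ∃ S : Set (List A),
        (∀ u v : List A, E q u v → (u ∈ S ↔ v ∈ S)) ∧ K ⊆ S ∧ H ∩ S = ∅}) := by
  classical
  set T : ℕ → Set ℕ := fun n => {q : ℕ | ∀ u v : List A, u ∈ K → v ∈ H →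
      u.length ≤ n → v.length ≤ n → ¬ E q u v} with hT
  -- a separator at level q forbids E q between K and H
  have key1 : ∀ q (S : Set (List A)), (∀ u v : List A, E q u v → (u ∈ S ↔ v ∈ S)) →
      K ⊆ S → H ∩ S = ∅ → ∀ u v, u ∈ K → v ∈ H → ¬ E q u v := by
    intro q S hS hK hH u v hu hv hE
    have hvS : v ∈ S := (hS u v hE).mp (hK hu)
    exact Set.eq_empty_iff_forall_notMem.mp hH v ⟨hv, hvS⟩
  -- each T n is nonempty
  have hne : ∀ n, (T n).Nonempty := by
    intro n
    have hfin1 : {l : List A | l.length ≤ n}.Finite := List.finite_length_le A n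
    have hfin2 : ({l : List A | l.length ≤ n} ×ˢ {l : List A | l.length ≤ n}).Finite :=
      hfin1.prod hfin1
    have hq : ∀ p : List A × List A, ∃ q, (p.1 ∈ K → p.2 ∈ H → ¬ E q p.1 p.2) := by
      intro p
      by_cases h : p.1 ∈ K ∧ p.2 ∈ H
      · have hne' : p.1 ≠ p.2 := fun he => (Set.disjoint_left.mp hdisj h.1) (he ▸ h.2)
        obtain ⟨q, hq⟩ := hsep _ _ hne'
        exact ⟨q, fun _ _ => hq⟩
      · exact ⟨0, fun h1 h2 => absurd ⟨h1, h2⟩ h⟩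
    choose f hf using hq
    obtain ⟨N, hN⟩ := (hfin2.image f).bddAbove
    refine ⟨N, fun u v hu hv hlu hlv hE => ?_⟩
    have hle : f (u, v) ≤ N := hN (Set.mem_image_of_mem f ⟨hlu, hlv⟩)
    exact hf (u, v) hu hv (hdec _ _ hle _ _ hE)
  -- T n is upward closed
  have hup : ∀ n q q', q ≤ q' → q ∈ T n → q' ∈ T n := by
    intro n q q' hle hq u v hu hv hlu hlv hE
    exact hq u v hu hv hlu hlv (hdec _ _ hle _ _ hE)
  have hmemσ : ∀ n, σ n ∈ T n := by
    intro n
    rw [hσ n]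
    exact Nat.sInf_mem (hne n)
  -- a uniform bound yields full separation in E
  have key2 : ∀ Q, (∀ n, σ n ≤ Q) → ∀ u v, u ∈ K → v ∈ H → ¬ E Q u v := by
    intro Q hQ u v hu hv hE
    set n := max u.length v.length with hn
    have : Q ∈ T n := hup n (σ n) Q (hQ n) (hmemσ n)
    exact this u v hu hv (le_max_left _ _) (le_max_right _ _) hE
  -- full separation yields a saturated separator S
  have key3 : ∀ Q, (∀ u v, u ∈ K → v ∈ H → ¬ E Q u v) →
      ∃ S : Set (List A), (∀ u v : List A, E Q u v → (u ∈ S ↔ v ∈ S)) ∧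
        K ⊆ S ∧ H ∩ S = ∅ := by
    intro Q h
    refine ⟨{w | ∃ u ∈ K, E Q u w}, ?_, ?_, ?_⟩
    · intro u v hE
      constructor
      · rintro ⟨w, hw, hwu⟩; exact ⟨w, hw, (hequiv Q).trans hwu hE⟩
      · rintro ⟨w, hw, hwv⟩; exact ⟨w, hw, (hequiv Q).trans hwv ((hequiv Q).symm hE)⟩
    · intro u hu; exact ⟨u, hu, (hequiv Q).refl u⟩
    · apply Set.eq_empty_iff_forall_notMem.mpr
      rintro v ⟨hv, w, hw, hwv⟩
      exact h w v hw hv hwv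
  have main : BddAbove (Set.range σ) ↔
      ∃ q, ∃ S : Set (List A), (∀ u v : List A, E q u v → (u ∈ S ↔ v ∈ S)) ∧
        K ⊆ S ∧ H ∩ S = ∅ := by
    constructor
    · rintro ⟨Q, hQ⟩
      have hQ' : ∀ n, σ n ≤ Q := fun n => hQ ⟨n, rfl⟩
      exact ⟨Q, key3 Q (key2 Q hQ')⟩
    · rintro ⟨q, S, hS, hK, hH⟩
      refine ⟨q, ?_⟩
      rintro x ⟨n, rfl⟩
      rw [hσ n]
      apply Nat.sInf_le
      intro u v hu hv _ _
      exact key1 q S hS hK hH u v hu hv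
  refine ⟨main, ?_⟩
  rintro hex
  have hbdd : BddAbove (Set.range σ) := main.mpr hex
  set W : Set ℕ := {q : ℕ | ∃ S : Set (List A),
      (∀ u v : List A, E q u v → (u ∈ S ↔ v ∈ S)) ∧ K ⊆ S ∧ H ∩ S = ∅} with hW
  obtain ⟨q0, S0, hS0⟩ := hex
  have hWne : W.Nonempty := ⟨q0, S0, hS0⟩
  obtain ⟨S, hS, hK, hH⟩ := Nat.sInf_mem hWne
  apply le_antisymm
  · apply ciSup_le
    intro n
    rw [hσ n]
    apply Nat.sInf_le
    intro u v hu hv _ _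
    exact key1 _ S hS hK hH u v hu hv
  · apply Nat.sInf_le
    have hQ' : ∀ n, σ n ≤ ⨆ n, σ n := fun n => le_ciSup hbdd n
    exact key3 _ (key2 _ hQ')
end

section
/- Syntactic cycle extraction: if L ⊆ Σ* is recognized by a surjective monoid morphism α : Σ* → M onto a finite monoid with L = α⁻¹(F), M is not aperiodic, and distinct elements of M are separated by contexts with respect to F, then there exist words r, s ∈ Σ*, a nonempty word x, integers h ≥ 0, p ≥ 2, and residues i, j < p such that for every t ≥ 0 exactly one of r x^{h+i+tp} s and r x^{h+j+tp} s belongs to L. -/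
/-- Syntactic cycle extraction: if `L = α⁻¹(F)` for a surjective morphism
`α : Σ* → M` onto a finite monoid that is not aperiodic and whose distinct elements
are separated by contexts with respect to `F`, then there are words `r, s`, a
nonempty word `x`, integers `h ≥ 0`, `p ≥ 2` and residues `i, j < p` such that for
every `t ≥ 0` exactly one of `r x^{h+i+tp} s` and `r x^{h+j+tp} s` lies in `L`. -/
theorem syntactic_cycle_extraction {A : Type*} [Finite A]
    (M : Type*) [Monoid M] [Finite M]
    (α : FreeMonoid A →* M) (hsurj : Function.Surjective α)
    (F : Set M) (L : Set (FreeMonoid A)) (hL : L = α ⁻¹' F)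
    (hnonap : ¬ ∃ ω : ℕ, ∀ m : M, m ^ ω = m ^ (ω + 1))
    (hctx : ∀ m m' : M, m ≠ m' →
      ∃ c d : M, Xor' (c * m * d ∈ F) (c * m' * d ∈ F)) :
    ∃ r s x : FreeMonoid A, x ≠ 1 ∧
      ∃ h p : ℕ, 2 ≤ p ∧ ∃ i j : ℕ, i < p ∧ j < p ∧
        ∀ t : ℕ, Xor' (r * x ^ (h + i + t * p) * s ∈ L)
                      (r * x ^ (h + j + t * p) * s ∈ L) := by
  classical
  push_neg at hnonap
  set N := Nat.card M with hNdef
  obtain ⟨a, ha⟩ := hnonap N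
  -- pigeonhole: among a^0, ..., a^N two coincide
  have : Fintype M := Fintype.ofFinite M
  obtain ⟨k, k', hkk', heq⟩ := Fintype.exists_ne_map_eq_of_card_lt
    (fun k : Fin (N + 1) => a ^ (k : ℕ))
    (by simp [hNdef, Nat.card_eq_fintype_card])
  have key : ∃ h p : ℕ, 0 < p ∧ h + p ≤ N ∧ a ^ h = a ^ (h + p) := by
    have hk := k.isLt
    have hk' := k'.isLt
    rcases lt_trichotomy (k : ℕ) (k' : ℕ) with hlt | heqk | hgt
    · refine ⟨k, k' - k, by omega, by omega, ?_⟩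
      rw [show (k : ℕ) + ((k' : ℕ) - k) = (k' : ℕ) by omega]; exact heq
    · exact absurd (Fin.ext heqk) hkk'
    · refine ⟨k', (k : ℕ) - k', by omega, by omega, ?_⟩
      rw [show (k' : ℕ) + ((k : ℕ) - k') = (k : ℕ) by omega]; exact heq.symm
  obtain ⟨h, p, hp0, hhpN, hper⟩ := key
  have per : ∀ m t : ℕ, a ^ (h + m + t * p) = a ^ (h + m) := by
    intro m t
    induction t with
    | zero => simp
    | succ t ih =>
      have e : h + m + (t + 1) * p = (h + p) + (m + t * p) := by ring
      rw [e, pow_add, ← hper, ← pow_add,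
        show h + (m + t * p) = h + m + t * p by ring, ih]
  have modlem : ∀ m : ℕ, a ^ (h + m) = a ^ (h + m % p) := by
    intro m
    conv_lhs => rw [show h + m = h + m % p + (m / p) * p by
      conv_lhs => rw [← Nat.mod_add_div' m p]
      ring]
    exact per (m % p) (m / p)
  set q := N - h with hq
  set i := q % p with hi
  set j := (q + 1) % p with hj
  have hNi : a ^ N = a ^ (h + i) := by
    rw [show N = h + q by omega]; exact modlem q
  have hNj : a ^ (N + 1) = a ^ (h + j) := by
    rw [show N + 1 = h + (q + 1) by omega]; exact modlem (q + 1)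
  have hne : a ^ (h + i) ≠ a ^ (h + j) := by
    rw [← hNi, ← hNj]; exact ha
  have hp2 : 2 ≤ p := by
    rcases Nat.lt_or_ge p 2 with h2 | h2
    · exfalso
      have hp1 : p = 1 := by omega
      apply hne
      rw [hi, hj, hp1, Nat.mod_one, Nat.mod_one]
    · exact h2
  obtain ⟨c, d, hxor⟩ := hctx _ _ hne
  obtain ⟨r, hr⟩ := hsurj c
  obtain ⟨s, hs⟩ := hsurj d
  obtain ⟨x, hx⟩ := hsurj a
  have hx1 : x ≠ 1 := by
    intro hx1
    apply ha
    have : a = 1 := by rw [← hx, hx1, map_one]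
    simp [this]
  have e1 : ∀ m t : ℕ, (r * x ^ (h + m + t * p) * s ∈ L) ↔ (c * a ^ (h + m) * d ∈ F) := by
    intro m t
    rw [hL]
    simp only [Set.mem_preimage, map_mul, map_pow, hr, hs, hx, per m t]
  refine ⟨r, s, x, hx1, h, p, hp2, i, j, Nat.mod_lt _ (by omega), Nat.mod_lt _ (by omega), ?_⟩
  intro t
  simp only [Xor'] at hxor ⊢
  rw [e1 i t, e1 j t]
  exact hxor
end

section
/- Logarithmic obstruction: suppose there are words r, s, a nonempty word x of length ℓ, constants h ≥ 0 and p ≥ 2, and residues i ≠ j mod p, such that for all k ≥ h with k ≡ i (mod p), r x^k s ∈ L, and for all k ≥ h with k ≡ j (mod p), r x^k s ∉ L; suppose also that m, m' ≥ 2^q implies r x^m s ≡_q r x^{m'} s. Then for every n with K(n) := ⌊(n − |r| − |s|)/ℓ⌋ satisfying K(n) − p + 1 ≥ max(h, 1), one has ρ_L(n) ≥ ⌊log₂(K(n) − p + 1)⌋ + 1. -/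
/-- The `m`-th power of a word under concatenation. -/
def wordPow {A : Type*} (x : List A) (m : ℕ) : List A := (List.replicate m x).flatten

lemma wordPow_length {A : Type*} (x : List A) (m : ℕ) :
    (wordPow x m).length = m * x.length := by
  induction m with
  | zero => simp [wordPow]
  | succ k ih =>
    simp only [wordPow, List.replicate_succ, List.flatten_cons, List.length_append] at *
    rw [ih]; ring

lemma exists_residue (B i p : ℕ) (hp : 0 < p) (hi : i < p) :
    ∃ m, B ≤ m ∧ m < B + p ∧ m % p = i := by
  have hd := Nat.div_add_mod B p
  have hm := Nat.mod_lt B hp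
  by_cases hc : B % p ≤ i
  · refine ⟨p * (B / p) + i, by omega, by omega, ?_⟩
    rw [Nat.mul_add_mod, Nat.mod_eq_of_lt hi]
  · refine ⟨p * (B / p) + p + i, by omega, by omega, ?_⟩
    rw [add_assoc, Nat.mul_add_mod, Nat.add_mod_left, Nat.mod_eq_of_lt hi]

/-- Logarithmic obstruction from a contexted cycle: if membership of `r x^k s` in `L`
is nonconstant modulo `p` for `k ≥ h`, and long contexted powers of `x` are
`≡_q`-equivalent (`m, m' ≥ 2^q` implies `r x^m s ≡_q r x^{m'} s`), then for every
horizon `n` with `K(n) − p + 1 ≥ max(h,1)`, where `K(n) = ⌊(n−|r|−|s|)/|x|⌋`, one has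
`ρ_L(n) ≥ ⌊log₂(K(n) − p + 1)⌋ + 1`. -/
theorem log_obstruction {A : Type*} [Finite A]
    (E : ℕ → List A → List A → Prop) (L : Set (List A))
    (hdec : ∀ q q' : ℕ, q ≤ q' → ∀ u v, E q' u v → E q u v)
    (hsep : ∀ u v : List A, u ≠ v → ∃ q, ¬ E q u v)
    (r s x : List A) (hx : x ≠ []) (h p : ℕ) (hp : 2 ≤ p)
    (i j : ℕ) (hi : i < p) (hj : j < p) (hij : i ≠ j)
    (hin : ∀ k, h ≤ k → k % p = i → (r ++ wordPow x k ++ s) ∈ L)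
    (hout : ∀ k, h ≤ k → k % p = j → (r ++ wordPow x k ++ s) ∉ L)
    (hpow : ∀ q m m' : ℕ, 2 ^ q ≤ m → 2 ^ q ≤ m' →
      E q (r ++ wordPow x m ++ s) (r ++ wordPow x m' ++ s))
    (n : ℕ)
    (hK : max h 1 + p ≤ (n - r.length - s.length) / x.length + 1) :
    Nat.log 2 ((n - r.length - s.length) / x.length + 1 - p) + 1 ≤
      sInf {q : ℕ | ∀ u v : List A, u ∈ L → v ∉ L →
        u.length ≤ n → v.length ≤ n → ¬ E q u v} := by
  set K := (n - r.length - s.length) / x.length with hKdef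
  set B := K + 1 - p with hBdef
  have hmax1 : 1 ≤ max h 1 := le_max_right h 1
  have hmaxh : h ≤ max h 1 := le_max_left h 1
  have hB1 : 1 ≤ B := by omega
  have hBh : h ≤ B := by omega
  have hxlen : 1 ≤ x.length := List.length_pos_iff.mpr hx
  -- the set is nonempty
  have hWfin : {l : List A | l.length ≤ n}.Finite := List.finite_length_le A n
  have hPfin : ({l : List A | l.length ≤ n} ×ˢ {l : List A | l.length ≤ n}).Finite :=
    hWfin.prod hWfin
  classical
  set f : List A × List A → ℕ :=
    fun uv => if hne : uv.1 ≠ uv.2 then (hsep uv.1 uv.2 hne).choose else 0 with hf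
  set Q0 := hPfin.toFinset.sup f with hQ0
  have hSne : {q : ℕ | ∀ u v : List A, u ∈ L → v ∉ L →
      u.length ≤ n → v.length ≤ n → ¬ E q u v}.Nonempty := by
    refine ⟨Q0, fun u v hu hv hun hvn hE => ?_⟩
    have hne : u ≠ v := fun e => hv (e ▸ hu)
    have hmemF : (u, v) ∈ hPfin.toFinset := by
      rw [Set.Finite.mem_toFinset]; exact ⟨hun, hvn⟩
    have hle : f (u, v) ≤ Q0 := Finset.le_sup hmemF
    have hEf : E (f (u, v)) u v := hdec _ _ hle u v hE
    rw [hf] at hEf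
    simp only [dif_pos hne] at hEf
    exact (hsep u v hne).choose_spec hEf
  refine le_csInf hSne fun q hq => ?_
  by_contra hlt
  push_neg at hlt
  have hqQ : q ≤ Nat.log 2 B := by omega
  have h2q : 2 ^ q ≤ B :=
    le_trans (Nat.pow_le_pow_right (by norm_num) hqQ) (Nat.pow_log_le_self 2 (by omega))
  obtain ⟨m, hm1, hm2, hm3⟩ := exists_residue B i p (by omega) hi
  obtain ⟨m', hm1', hm2', hm3'⟩ := exists_residue B j p (by omega) hj
  have hmK : m ≤ K := by omega
  have hmK' : m' ≤ K := by omega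
  have hKl : K * x.length ≤ n - r.length - s.length := Nat.div_mul_le_self _ _
  have hlen : ∀ k, k ≤ K → 1 ≤ k → (r ++ wordPow x k ++ s).length ≤ n := by
    intro k hk hk1
    have h1 : k * x.length ≤ n - r.length - s.length :=
      le_trans (Nat.mul_le_mul_right _ hk) hKl
    have h2 : 1 ≤ k * x.length := Nat.one_le_iff_ne_zero.mpr (Nat.mul_ne_zero (by omega) (by omega))
    simp only [List.length_append, wordPow_length]
    omega
  have hE : E q (r ++ wordPow x m ++ s) (r ++ wordPow x m' ++ s) :=
    hpow q m m' (by omega) (by omega)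
  exact hq _ _ (hin m (by omega) hm3) (hout m' (by omega) hm3')
    (hlen m hmK (by omega)) (hlen m' hmK' (by omega)) hE
end

section
/- For the modular unary language Mod_{p,R} = { a^m : m mod p ∈ R } with p ≥ 2 and ∅ ≠ R ⊊ {0,...,p−1}, and a rank-equivalence family with a^m ≡_q a^{m'} whenever m, m' ≥ 2^q, the profile satisfies ρ(n) ≥ ⌊log₂(n − p + 1)⌋ + 1 for all n ≥ p. -/
private lemma exists_mod_in_interval (p L r : ℕ) (hr : r < p) :
    ∃ m, L ≤ m ∧ m < L + p ∧ m % p = r := by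
  have hdm := Nat.div_add_mod L p
  have hLm : L % p < p := Nat.mod_lt _ (by omega)
  rcases le_or_gt (L % p) r with h | h
  · refine ⟨p * (L / p) + r, by omega, by omega, ?_⟩
    rw [Nat.mul_add_mod]; exact Nat.mod_eq_of_lt hr
  · refine ⟨p * (L / p + 1) + r, ?_, ?_, ?_⟩
    · have : p * (L / p + 1) = p * (L / p) + p := by ring
      omega
    · have : p * (L / p + 1) = p * (L / p) + p := by ring
      omega
    · rw [Nat.mul_add_mod]; exact Nat.mod_eq_of_lt hr

/-- For the modular unary language `Mod_{p,R} = { a^m : m mod p ∈ R }` with `p ≥ 2`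
and `∅ ≠ R ⊊ {0,…,p−1}`, identifying `{a}*` with `ℕ` via length, if long unary words
collapse (`a^m ≡_q a^{m'}` whenever `m, m' ≥ 2^q`), then
`ρ(n) ≥ ⌊log₂(n − p + 1)⌋ + 1` for all `n ≥ p`. -/
theorem modular_unary_lower_bound
    (E : ℕ → ℕ → ℕ → Prop)
    (hdec : ∀ q q' : ℕ, q ≤ q' → ∀ u v, E q' u v → E q u v)
    (hsep : ∀ u v : ℕ, u ≠ v → ∃ q, ¬ E q u v)
    (hcollapse : ∀ q m m' : ℕ, 2 ^ q ≤ m → 2 ^ q ≤ m' → E q m m')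
    (p : ℕ) (hp : 2 ≤ p) (R : Set ℕ)
    (hR : R.Nonempty) (hRsub : R ⊆ {k | k < p}) (hRne : R ≠ {k | k < p})
    (n : ℕ) (hn : p ≤ n) :
    Nat.log 2 (n - p + 1) + 1 ≤
      sInf {q : ℕ | ∀ m m' : ℕ, m % p ∈ R → m' % p ∉ R →
        m ≤ n → m' ≤ n → ¬ E q m m'} := by
  classical
  set S : Set ℕ := {q : ℕ | ∀ m m' : ℕ, m % p ∈ R → m' % p ∉ R →
        m ≤ n → m' ≤ n → ¬ E q m m'} with hS
  -- S is nonempty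
  have hSne : S.Nonempty := by
    set f : ℕ → ℕ → ℕ := fun m m' =>
      if h : m ≠ m' then Classical.choose (hsep m m' h) else 0 with hf
    set Q : ℕ := (Finset.range (n+1) ×ˢ Finset.range (n+1)).sup
      (fun x => f x.1 x.2) with hQ
    refine ⟨Q, ?_⟩
    intro m m' hmR hm'R hmn hm'n hE
    have hne : m ≠ m' := by
      intro h; subst h; exact hm'R hmR
    have hfE : ¬ E (f m m') m m' := by
      simp only [hf, dif_pos hne]
      exact Classical.choose_spec (hsep m m' hne)
    have hle : f m m' ≤ Q := by
      rw [hQ]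
      exact Finset.le_sup (f := fun x : ℕ × ℕ => f x.1 x.2)
        (by simp [Finset.mem_product, Nat.lt_succ_iff, hmn, hm'n] : (m, m') ∈ _)
    exact hfE (hdec _ _ hle _ _ hE)
  refine le_csInf hSne ?_
  intro q hq
  by_contra hcon
  push_neg at hcon
  have hqlog : q ≤ Nat.log 2 (n - p + 1) := by omega
  have hL0 : n - p + 1 ≠ 0 := by omega
  have hpow : 2 ^ q ≤ n - p + 1 := Nat.pow_le_of_le_log hL0 hqlog
  obtain ⟨r, hrR⟩ := hR
  have hrp : r < p := hRsub hrR
  -- find r' < p with r' ∉ R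
  have hr' : ∃ r', r' < p ∧ r' ∉ R := by
    by_contra h
    push_neg at h
    apply hRne
    ext k
    exact ⟨fun hk => hRsub hk, fun hk => h k hk⟩
  obtain ⟨r', hr'p, hr'R⟩ := hr'
  obtain ⟨m, hm1, hm2, hm3⟩ := exists_mod_in_interval p (n - p + 1) r hrp
  obtain ⟨m', hm'1, hm'2, hm'3⟩ := exists_mod_in_interval p (n - p + 1) r' hr'p
  have := hq m m' (by rw [hm3]; exact hrR) (by rw [hm'3]; exact hr'R)
    (by omega) (by omega)
  exact this (hcollapse q m m' (by omega) (by omega))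
end
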